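/- For f continuously differentiable on [0,∞) with f(0) defined, the composition A(A⁻¹f) also equals f; that is, the Abel transform A and the operator A⁻¹ defined by (A⁻¹g)(x) = (2/π) d/dx ∫₀ˣ s g(s)/√(x²−s²) ds satisfy A(A⁻¹f) = f on (0,∞). -/

import Mathlib

open Real Set MeasureTheory intervalIntegral

noncomputable def abel (f : ℝ → ℝ) (x : ℝ) : ℝ :=
  ∫ s in (0:ℝ)..x, f s / Real.sqrt (x ^ 2 - s ^ 2)

noncomputable def abelInv (g : ℝ → ℝ) (x : ℝ) : ℝ :=
  (2 / Real.pi) * deriv (fun y => ∫ s in (0:ℝ)..y, s * g s / Real.sqrt (y ^ 2 - s ^ 2)) x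

noncomputable def K0 (x s : ℝ) : ℝ :=
  ∫ t in s..x, 1 / Real.sqrt ((t ^ 2 - s ^ 2) * (x ^ 2 - t ^ 2))

noncomputable def K2 (x s : ℝ) : ℝ :=
  ∫ t in s..x, t ^ 2 / Real.sqrt ((t ^ 2 - s ^ 2) * (x ^ 2 - t ^ 2))


namespace AbelAux

lemma mem_Icc_of_Ioo {θ : ℝ} (hθ : θ ∈ Ioo 0 (π/2)) : θ ∈ Icc (-(π/2)) (π/2) :=
  ⟨by linarith [hθ.1, Real.pi_pos], hθ.2.le⟩

lemma sin_mem (y θ : ℝ) (hy : 0 < y) (hθ : θ ∈ Ioo 0 (π/2)) :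
    y * Real.sin θ ∈ Ioo 0 y := by
  obtain ⟨h0, h2⟩ := hθ
  have hs : 0 < Real.sin θ := Real.sin_pos_of_pos_of_lt_pi h0 (h2.trans (by linarith [Real.pi_pos]))
  have hs1 : Real.sin θ < 1 := by
    have := Real.strictMonoOn_sin (mem_Icc_of_Ioo ⟨h0, h2⟩)
      (⟨by linarith [Real.pi_pos], le_refl _⟩ : (π/2) ∈ Icc (-(π/2)) (π/2)) h2
    simpa using this
  exact ⟨by positivity, by nlinarith⟩

lemma image_sin (y : ℝ) (hy : 0 < y) :
    (fun θ => y * Real.sin θ) '' Ioo 0 (π/2) = Ioo 0 y := by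
  ext v
  constructor
  · rintro ⟨θ, hθ, rfl⟩; exact sin_mem y θ hy hθ
  · rintro ⟨h0, h1⟩
    refine ⟨Real.arcsin (v / y), ⟨?_, ?_⟩, ?_⟩
    · exact Real.arcsin_pos.mpr (div_pos h0 hy)
    · exact Real.arcsin_lt_pi_div_two.mpr (by rw [div_lt_one hy]; exact h1)
    · show y * Real.sin (Real.arcsin (v / y)) = v
      rw [Real.sin_arcsin (by linarith [div_nonneg h0.le hy.le]) (by rw [div_le_one hy]; exact h1.le)]
      field_simp

lemma injOn_sin (y : ℝ) (hy : 0 < y) :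
    InjOn (fun θ => y * Real.sin θ) (Ioo 0 (π/2)) := by
  intro a ha b hb h
  exact Real.injOn_sin (mem_Icc_of_Ioo ha) (mem_Icc_of_Ioo hb)
    (mul_left_cancel₀ (ne_of_gt hy) h)

lemma cov_sin (y : ℝ) (hy : 0 < y) (G : ℝ → ℝ) :
    ∫ u in Ioo 0 y, G u = ∫ θ in Ioo 0 (π/2), (y * Real.cos θ) * G (y * Real.sin θ) := by
  have h := integral_image_eq_integral_abs_deriv_smul (f := fun θ => y * Real.sin θ)
    (f' := fun θ => y * Real.cos θ) measurableSet_Ioo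
    (fun θ _ => ((Real.hasDerivAt_sin θ).const_mul y).hasDerivWithinAt)
    (injOn_sin y hy) G
  rw [image_sin y hy] at h
  rw [h]
  refine setIntegral_congr_fun measurableSet_Ioo (fun θ hθ => ?_)
  have hc : 0 < Real.cos θ := Real.cos_pos_of_mem_Ioo
    ⟨by linarith [hθ.1, Real.pi_pos], hθ.2⟩
  rw [smul_eq_mul, abs_of_pos (by positivity)]

lemma cov_sin_integrable (y : ℝ) (hy : 0 < y) (G : ℝ → ℝ) :
    IntegrableOn G (Ioo 0 y) ↔
      IntegrableOn (fun θ => (y * Real.cos θ) * G (y * Real.sin θ)) (Ioo 0 (π/2)) := by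
  have h := integrableOn_image_iff_integrableOn_abs_deriv_smul (f := fun θ => y * Real.sin θ)
    (f' := fun θ => y * Real.cos θ) measurableSet_Ioo
    (fun θ _ => ((Real.hasDerivAt_sin θ).const_mul y).hasDerivWithinAt)
    (injOn_sin y hy) G
  rw [image_sin y hy] at h
  rw [h]
  refine integrableOn_congr_fun (fun θ hθ => ?_) measurableSet_Ioo
  have hc : 0 < Real.cos θ := Real.cos_pos_of_mem_Ioo
    ⟨by linarith [hθ.1, Real.pi_pos], hθ.2⟩
  rw [smul_eq_mul, abs_of_pos (by positivity)]

lemma sqrt_cos_helper (y θ : ℝ) (hy : 0 ≤ y) (hθ : θ ∈ Ioo 0 (π/2)) :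
    Real.sqrt (y ^ 2 - (y * Real.sin θ) ^ 2) = y * Real.cos θ := by
  have hc : 0 ≤ Real.cos θ := (Real.cos_pos_of_mem_Ioo
    ⟨by linarith [hθ.1, Real.pi_pos], hθ.2⟩).le
  have h : y ^ 2 - (y * Real.sin θ) ^ 2 = (y * Real.cos θ) ^ 2 := by
    have := Real.sin_sq_add_cos_sq θ; nlinarith
  rw [h, Real.sqrt_sq (by positivity)]

/-- the substitution map for the kernel integral -/
noncomputable def km (u x ψ : ℝ) : ℝ := Real.sqrt (u ^ 2 + (x ^ 2 - u ^ 2) * Real.sin ψ ^ 2)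

noncomputable def km' (u x ψ : ℝ) : ℝ :=
  (x ^ 2 - u ^ 2) * (Real.sin ψ * Real.cos ψ) / km u x ψ

lemma km_sq_pos {u x : ℝ} (hu : 0 < u) (hux : u < x) (ψ : ℝ) :
    0 < u ^ 2 + (x ^ 2 - u ^ 2) * Real.sin ψ ^ 2 := by
  have h1 : 0 < x ^ 2 - u ^ 2 := by nlinarith
  nlinarith [sq_nonneg (Real.sin ψ), sq_nonneg u, hu]

lemma km_pos {u x : ℝ} (hu : 0 < u) (hux : u < x) (ψ : ℝ) : 0 < km u x ψ :=
  Real.sqrt_pos.mpr (km_sq_pos hu hux ψ)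

lemma km_mem {u x : ℝ} (hu : 0 < u) (hux : u < x) (ψ : ℝ) (hψ : ψ ∈ Ioo 0 (π/2)) :
    km u x ψ ∈ Ioo u x := by
  have hs : Real.sin ψ ∈ Ioo (0:ℝ) 1 := by
    have := sin_mem 1 ψ one_pos hψ; simpa using this
  have h1 : 0 < x ^ 2 - u ^ 2 := by nlinarith
  constructor
  · have h2 : u ^ 2 < u ^ 2 + (x ^ 2 - u ^ 2) * Real.sin ψ ^ 2 := by
      have := mul_pos h1 (pow_pos hs.1 2); linarith
    calc u = Real.sqrt (u ^ 2) := (Real.sqrt_sq hu.le).symm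
    _ < km u x ψ := Real.sqrt_lt_sqrt (by positivity) h2
  · have h2 : u ^ 2 + (x ^ 2 - u ^ 2) * Real.sin ψ ^ 2 < x ^ 2 := by
      have hlt : Real.sin ψ ^ 2 < 1 := by nlinarith [hs.1, hs.2]
      have := mul_lt_of_lt_one_right h1 hlt; linarith
    calc km u x ψ < Real.sqrt (x ^ 2) := Real.sqrt_lt_sqrt (km_sq_pos hu hux ψ).le h2
    _ = x := Real.sqrt_sq (by linarith)

lemma km_image {u x : ℝ} (hu : 0 < u) (hux : u < x) :
    km u x '' Ioo 0 (π/2) = Ioo u x := by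
  ext t
  constructor
  · rintro ⟨ψ, hψ, rfl⟩; exact km_mem hu hux ψ hψ
  · rintro ⟨h1, h2⟩
    have hd : 0 < x ^ 2 - u ^ 2 := by nlinarith
    have hr0 : 0 < (t ^ 2 - u ^ 2) / (x ^ 2 - u ^ 2) := by
      apply div_pos (by nlinarith) hd
    have hr1 : (t ^ 2 - u ^ 2) / (x ^ 2 - u ^ 2) < 1 := by
      rw [div_lt_one hd]; nlinarith
    set z := Real.sqrt ((t ^ 2 - u ^ 2) / (x ^ 2 - u ^ 2)) with hz
    have hz0 : 0 < z := Real.sqrt_pos.mpr hr0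
    have hz1 : z < 1 := by
      rw [hz, show (1:ℝ) = Real.sqrt 1 by simp]
      exact Real.sqrt_lt_sqrt hr0.le hr1
    refine ⟨Real.arcsin z, ⟨Real.arcsin_pos.mpr hz0,
      Real.arcsin_lt_pi_div_two.mpr hz1⟩, ?_⟩
    show km u x (Real.arcsin z) = t
    rw [km, Real.sin_arcsin (by linarith) hz1.le, hz, Real.sq_sqrt hr0.le]
    rw [mul_div_cancel₀ _ (ne_of_gt hd)]
    have h3 : u ^ 2 + (t ^ 2 - u ^ 2) = t ^ 2 := by ring
    rw [h3, Real.sqrt_sq (by linarith [hu])]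

lemma km_injOn {u x : ℝ} (hu : 0 < u) (hux : u < x) : InjOn (km u x) (Ioo 0 (π/2)) := by
  intro a ha b hb h
  have hd : 0 < x ^ 2 - u ^ 2 := by nlinarith
  have hsq : u ^ 2 + (x ^ 2 - u ^ 2) * Real.sin a ^ 2
      = u ^ 2 + (x ^ 2 - u ^ 2) * Real.sin b ^ 2 := by
    have h2 := congrArg (fun t : ℝ => t ^ 2) h
    simpa [km, Real.sq_sqrt (km_sq_pos hu hux a).le,
      Real.sq_sqrt (km_sq_pos hu hux b).le] using h2
  have h3 : (x ^ 2 - u ^ 2) * Real.sin a ^ 2 = (x ^ 2 - u ^ 2) * Real.sin b ^ 2 := by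
    linarith
  have hsin_sq : Real.sin a ^ 2 = Real.sin b ^ 2 := mul_left_cancel₀ (ne_of_gt hd) h3
  have hsa : 0 ≤ Real.sin a := Real.sin_nonneg_of_nonneg_of_le_pi ha.1.le
    (by linarith [ha.2, Real.pi_pos])
  have hsb : 0 ≤ Real.sin b := Real.sin_nonneg_of_nonneg_of_le_pi hb.1.le
    (by linarith [hb.2, Real.pi_pos])
  have h4 : Real.sin a = Real.sin b := by nlinarith
  exact Real.injOn_sin (mem_Icc_of_Ioo ha) (mem_Icc_of_Ioo hb) h4

lemma km_hasDeriv {u x : ℝ} (hu : 0 < u) (hux : u < x) (ψ : ℝ) :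
    HasDerivAt (km u x) (km' u x ψ) ψ := by
  have hc : HasDerivAt (fun ψ => u ^ 2 + (x ^ 2 - u ^ 2) * Real.sin ψ ^ 2)
      ((x ^ 2 - u ^ 2) * (2 * Real.sin ψ * Real.cos ψ)) ψ := by
    have h1 : HasDerivAt (fun ψ => Real.sin ψ ^ 2)
        (2 * Real.sin ψ ^ 1 * Real.cos ψ) ψ := (Real.hasDerivAt_sin ψ).pow 2
    simpa [mul_assoc] using ((h1.const_mul (x ^ 2 - u ^ 2)).const_add (u ^ 2))
  have h2 := (Real.hasDerivAt_sqrt (ne_of_gt (km_sq_pos hu hux ψ))).comp ψ hc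
  refine HasDerivAt.congr_deriv h2 ?_
  rw [km', km]
  field_simp

lemma kernel_pointwise {u x : ℝ} (hu : 0 < u) (hux : u < x) (ψ : ℝ) (hψ : ψ ∈ Ioo 0 (π/2)) :
    |km' u x ψ| * (km u x ψ / (Real.sqrt (x ^ 2 - km u x ψ ^ 2)
      * Real.sqrt (km u x ψ ^ 2 - u ^ 2))) = 1 := by
  have hs : 0 < Real.sin ψ := Real.sin_pos_of_pos_of_lt_pi hψ.1
    (by linarith [hψ.2, Real.pi_pos])
  have hc : 0 < Real.cos ψ := Real.cos_pos_of_mem_Ioo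
    ⟨by linarith [hψ.1, Real.pi_pos], hψ.2⟩
  have hd : 0 < x ^ 2 - u ^ 2 := by nlinarith
  have hkm := km_pos hu hux ψ
  have hsq : km u x ψ ^ 2 = u ^ 2 + (x ^ 2 - u ^ 2) * Real.sin ψ ^ 2 :=
    Real.sq_sqrt (km_sq_pos hu hux ψ).le
  have e1 : x ^ 2 - km u x ψ ^ 2 = (x ^ 2 - u ^ 2) * Real.cos ψ ^ 2 := by
    have := Real.sin_sq_add_cos_sq ψ; rw [hsq]; nlinarith
  have e2 : km u x ψ ^ 2 - u ^ 2 = (x ^ 2 - u ^ 2) * Real.sin ψ ^ 2 := by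
    rw [hsq]; ring
  have s1 : Real.sqrt (x ^ 2 - km u x ψ ^ 2) = Real.sqrt (x ^ 2 - u ^ 2) * Real.cos ψ := by
    rw [e1, Real.sqrt_mul hd.le, Real.sqrt_sq hc.le]
  have s2 : Real.sqrt (km u x ψ ^ 2 - u ^ 2) = Real.sqrt (x ^ 2 - u ^ 2) * Real.sin ψ := by
    rw [e2, Real.sqrt_mul hd.le, Real.sqrt_sq hs.le]
  rw [s1, s2, km']
  have habs : |(x ^ 2 - u ^ 2) * (Real.sin ψ * Real.cos ψ) / km u x ψ|
      = (x ^ 2 - u ^ 2) * (Real.sin ψ * Real.cos ψ) / km u x ψ := by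
    apply abs_of_pos; positivity
  rw [habs]
  have hss : Real.sqrt (x ^ 2 - u ^ 2) * Real.sqrt (x ^ 2 - u ^ 2) = x ^ 2 - u ^ 2 :=
    Real.mul_self_sqrt hd.le
  have hsd : 0 < Real.sqrt (x ^ 2 - u ^ 2) := Real.sqrt_pos.mpr hd
  have hss' : Real.sqrt (x ^ 2 - u ^ 2) ^ 2 = x ^ 2 - u ^ 2 := Real.sq_sqrt hd.le
  field_simp
  linear_combination (-1) * hss'

lemma volume_Ioo_half_pi : ∫ (_ : ℝ) in Ioo 0 (π/2), (1:ℝ) = π / 2 := by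
  simp [Real.volume_Ioo, ENNReal.toReal_ofReal (by positivity : (0:ℝ) ≤ π/2)]
  positivity

lemma kernel_value {u x : ℝ} (hu : 0 < u) (hux : u < x) :
    ∫ v in Ioo u x, v / (Real.sqrt (x ^ 2 - v ^ 2) * Real.sqrt (v ^ 2 - u ^ 2)) = π / 2 := by
  have h := integral_image_eq_integral_abs_deriv_smul (f := km u x) (f' := km' u x)
    measurableSet_Ioo (fun ψ _ => (km_hasDeriv hu hux ψ).hasDerivWithinAt)
    (km_injOn hu hux)
    (fun v => v / (Real.sqrt (x ^ 2 - v ^ 2) * Real.sqrt (v ^ 2 - u ^ 2)))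
  rw [km_image hu hux] at h
  rw [h, setIntegral_congr_fun measurableSet_Ioo
    (fun ψ hψ => by simpa [smul_eq_mul] using kernel_pointwise hu hux ψ hψ),
    volume_Ioo_half_pi]

lemma kernel_integrable {u x : ℝ} (hu : 0 < u) (hux : u < x) :
    IntegrableOn (fun v => v / (Real.sqrt (x ^ 2 - v ^ 2) * Real.sqrt (v ^ 2 - u ^ 2)))
      (Ioo u x) := by
  have h := integrableOn_image_iff_integrableOn_abs_deriv_smul (f := km u x) (f' := km' u x)
    measurableSet_Ioo (fun ψ _ => (km_hasDeriv hu hux ψ).hasDerivWithinAt)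
    (km_injOn hu hux)
    (fun v => v / (Real.sqrt (x ^ 2 - v ^ 2) * Real.sqrt (v ^ 2 - u ^ 2)))
  rw [km_image hu hux] at h
  rw [h, integrableOn_congr_fun
    (fun ψ hψ => by simpa [smul_eq_mul] using kernel_pointwise hu hux ψ hψ) measurableSet_Ioo]
  exact integrableOn_const measure_Ioo_lt_top.ne


noncomputable def gfun (f : ℝ → ℝ) (u : ℝ) : ℝ := u * f u

noncomputable def gd (f : ℝ → ℝ) (u : ℝ) : ℝ := f u + u * derivWithin f (Ici 0) u

variable {f : ℝ → ℝ} (hf : ContDiffOn ℝ 1 f (Set.Ici 0))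

include hf

lemma gd_contOn : ContinuousOn (gd f) (Ici 0) := by
  have h1 : ContinuousOn f (Ici 0) := hf.continuousOn
  have h2 : ContinuousOn (fun u => derivWithin f (Ici 0) u) (Ici 0) :=
    hf.continuousOn_derivWithin (uniqueDiffOn_Ici 0) le_rfl
  exact h1.add (continuousOn_id.mul h2)

lemma gfun_contOn : ContinuousOn (gfun f) (Ici 0) :=
  continuousOn_id.mul hf.continuousOn

lemma g_hasDeriv (u : ℝ) (hu : 0 < u) : HasDerivAt (gfun f) (gd f u) u := by
  have hmem : Ici (0:ℝ) ∈ nhds u := Ici_mem_nhds hu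
  have hd : HasDerivAt f (derivWithin f (Ici 0) u) u :=
    ((hf.differentiableOn one_ne_zero u hu.le).hasDerivWithinAt).hasDerivAt hmem
  have h := (hasDerivAt_id u).mul hd
  exact h.congr_deriv (by simp [gd])

lemma gd_integral (x : ℝ) (hx : 0 < x) : ∫ u in (0:ℝ)..x, gd f u = x * f x := by
  have hcont : ContinuousOn (gfun f) (Icc 0 x) :=
    (gfun_contOn hf).mono (Icc_subset_Ici_self)
  have hint : IntervalIntegrable (gd f) volume 0 x := by
    apply ContinuousOn.intervalIntegrable
    rw [uIcc_of_le hx.le]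
    exact (gd_contOn hf).mono (Icc_subset_Ici_self)
  have h := intervalIntegral.integral_eq_sub_of_hasDeriv_right_of_le hx.le hcont
    (fun u hu => ((g_hasDeriv hf u hu.1).hasDerivWithinAt)) hint
  simpa [gfun] using h

set_option maxHeartbeats 1000000 in
lemma F_hasDeriv (t : ℝ) (ht : 0 < t) :
    HasDerivAt (fun y => ∫ θ in (0:ℝ)..(π/2), gfun f (y * Real.sin θ))
      (∫ θ in (0:ℝ)..(π/2), Real.sin θ * gd f (t * Real.sin θ)) t := by
  obtain ⟨M, hM⟩ := (isCompact_Icc (a := (0:ℝ)) (b := 2*t)).exists_bound_of_continuousOn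
      ((gd_contOn hf).mono (Icc_subset_Ici_self))
  have hπ : (0:ℝ) < π/2 := by positivity
  have hmapsTo : ∀ y : ℝ, 0 ≤ y → ∀ θ ∈ Icc (0:ℝ) (π/2), y * Real.sin θ ∈ Ici (0:ℝ) := by
    intro y hy θ hθ
    exact mul_nonneg hy (Real.sin_nonneg_of_nonneg_of_le_pi hθ.1
      (hθ.2.trans (by linarith [Real.pi_pos])))
  have hcont : ∀ y : ℝ, 0 ≤ y → ContinuousOn (fun θ => gfun f (y * Real.sin θ)) (Icc 0 (π/2)) := by
    intro y hy
    exact (gfun_contOn hf).comp (Continuous.continuousOn (by continuity)) (hmapsTo y hy)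
  have hcont' : ∀ y : ℝ, 0 ≤ y →
      ContinuousOn (fun θ => Real.sin θ * gd f (y * Real.sin θ)) (Icc 0 (π/2)) := by
    intro y hy
    exact Real.continuous_sin.continuousOn.mul
      ((gd_contOn hf).comp (Continuous.continuousOn (by continuity)) (hmapsTo y hy))
  have c1 : ∀ᶠ y in nhds t, AEStronglyMeasurable (fun θ => gfun f (y * Real.sin θ))
      (volume.restrict (Set.uIoc 0 (π/2))) := by
    refine Filter.eventually_of_mem (Ioi_mem_nhds ht) (fun y hy => ?_)
    refine ((hcont y (le_of_lt hy)).mono ?_).aestronglyMeasurable measurableSet_uIoc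
    rw [uIoc_of_le hπ.le]
    exact Ioc_subset_Icc_self
  have c2 : IntervalIntegrable (fun θ => gfun f (t * Real.sin θ)) volume 0 (π/2) := by
    apply ContinuousOn.intervalIntegrable
    rw [uIcc_of_le hπ.le]
    exact hcont t ht.le
  have c3 : AEStronglyMeasurable (fun θ => Real.sin θ * gd f (t * Real.sin θ))
      (volume.restrict (Set.uIoc 0 (π/2))) := by
    refine ((hcont' t ht.le).mono ?_).aestronglyMeasurable measurableSet_uIoc
    rw [uIoc_of_le hπ.le]
    exact Ioc_subset_Icc_self
  have c4 : ∀ᵐ θ ∂volume, θ ∈ Set.uIoc (0:ℝ) (π/2) → ∀ y ∈ Metric.ball t (t/2),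
      ‖Real.sin θ * gd f (y * Real.sin θ)‖ ≤ M := by
    refine MeasureTheory.ae_of_all _ (fun θ hθ y hy => ?_)
    rw [uIoc_of_le hπ.le] at hθ
    rw [Metric.mem_ball, Real.dist_eq, abs_lt] at hy
    have hy0 : 0 < y := by linarith [hy.1]
    have hs0 : 0 ≤ Real.sin θ := Real.sin_nonneg_of_nonneg_of_le_pi hθ.1.le
      (hθ.2.trans (by linarith [Real.pi_pos]))
    have hs1 : Real.sin θ ≤ 1 := Real.sin_le_one θ
    have harg : y * Real.sin θ ∈ Icc (0:ℝ) (2*t) := by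
      constructor
      · positivity
      · nlinarith
    have hMθ := hM _ harg
    rw [Real.norm_eq_abs] at hMθ ⊢
    rw [abs_mul]
    calc |Real.sin θ| * |gd f (y * Real.sin θ)| ≤ 1 * M := by
          apply mul_le_mul _ hMθ (abs_nonneg _) zero_le_one
          rw [abs_of_nonneg hs0]; exact hs1
    _ = M := one_mul M
  have c6 : ∀ᵐ θ ∂volume, θ ∈ Set.uIoc (0:ℝ) (π/2) → ∀ y ∈ Metric.ball t (t/2),
      HasDerivAt (fun y => gfun f (y * Real.sin θ)) (Real.sin θ * gd f (y * Real.sin θ)) y := by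
    refine MeasureTheory.ae_of_all _ (fun θ hθ y hy => ?_)
    rw [uIoc_of_le hπ.le] at hθ
    rw [Metric.mem_ball, Real.dist_eq, abs_lt] at hy
    have hy0 : 0 < y := by linarith [hy.1]
    have hs0 : 0 < Real.sin θ := Real.sin_pos_of_pos_of_lt_pi hθ.1
      (lt_of_le_of_lt hθ.2 (by linarith [Real.pi_pos]))
    have h1 := g_hasDeriv hf (y * Real.sin θ) (by positivity)
    have h2 : HasDerivAt (fun y : ℝ => y * Real.sin θ) (Real.sin θ) y := by
      simpa using (hasDerivAt_id y).mul_const (Real.sin θ)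
    have h3 := h1.comp y h2
    exact h3.congr_deriv (by ring)
  exact (intervalIntegral.hasDerivAt_integral_of_dominated_loc_of_deriv_le
    (F := fun y θ => gfun f (y * Real.sin θ))
    (F' := fun y θ => Real.sin θ * gd f (y * Real.sin θ))
    (bound := fun _ => M)
    (Metric.ball_mem_nhds t (by positivity : (0:ℝ) < t/2)) c1 c2 c3 c4 intervalIntegrable_const c6).2

omit hf in
lemma F_eq (y : ℝ) (hy : 0 < y) :
    (∫ s in (0:ℝ)..y, s * f s / Real.sqrt (y ^ 2 - s ^ 2))
      = ∫ θ in (0:ℝ)..(π/2), gfun f (y * Real.sin θ) := by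
  have hπ : (0:ℝ) < π/2 := by positivity
  rw [intervalIntegral.integral_of_le hy.le, intervalIntegral.integral_of_le hπ.le,
    MeasureTheory.integral_Ioc_eq_integral_Ioo, MeasureTheory.integral_Ioc_eq_integral_Ioo,
    cov_sin y hy (fun s => s * f s / Real.sqrt (y ^ 2 - s ^ 2))]
  refine setIntegral_congr_fun measurableSet_Ioo fun θ hθ => ?_
  have hc : 0 < Real.cos θ := Real.cos_pos_of_mem_Ioo
    ⟨by linarith [hθ.1, Real.pi_pos], hθ.2⟩
  rw [sqrt_cos_helper y θ hy.le hθ, gfun]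
  field_simp

omit hf in
lemma one_div_sqrt_integral (v : ℝ) (hv : 0 < v) :
    ∫ u in Ioo 0 v, 1 / Real.sqrt (v ^ 2 - u ^ 2) = π / 2 := by
  rw [cov_sin v hv (fun u => 1 / Real.sqrt (v ^ 2 - u ^ 2)),
    setIntegral_congr_fun measurableSet_Ioo (fun θ hθ => ?_), volume_Ioo_half_pi]
  have hc : 0 < Real.cos θ := Real.cos_pos_of_mem_Ioo
    ⟨by linarith [hθ.1, Real.pi_pos], hθ.2⟩
  rw [sqrt_cos_helper v θ hv.le hθ]
  field_simp

omit hf in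
lemma one_div_sqrt_integrable (v : ℝ) (hv : 0 < v) :
    IntegrableOn (fun u => 1 / Real.sqrt (v ^ 2 - u ^ 2)) (Ioo 0 v) := by
  rw [cov_sin_integrable v hv (fun u => 1 / Real.sqrt (v ^ 2 - u ^ 2))]
  have heq : EqOn (fun θ => v * Real.cos θ * (1 / Real.sqrt (v ^ 2 - (v * Real.sin θ) ^ 2)))
      (fun _ => (1:ℝ)) (Ioo 0 (π/2)) := by
    intro θ hθ
    have hc : 0 < Real.cos θ := Real.cos_pos_of_mem_Ioo
      ⟨by linarith [hθ.1, Real.pi_pos], hθ.2⟩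
    show v * Real.cos θ * (1 / Real.sqrt (v ^ 2 - (v * Real.sin θ) ^ 2)) = 1
    rw [sqrt_cos_helper v θ hv.le hθ]
    field_simp
  rw [integrableOn_congr_fun heq measurableSet_Ioo]
  exact integrableOn_const measure_Ioo_lt_top.ne

lemma gd_comp_sin_contOn (v : ℝ) (hv : 0 ≤ v) :
    ContinuousOn (fun θ => gd f (v * Real.sin θ)) (Icc 0 (π/2)) := by
  refine (gd_contOn hf).comp ((continuous_const.mul Real.continuous_sin).continuousOn) ?_
  intro θ hθ
  exact mul_nonneg hv (Real.sin_nonneg_of_nonneg_of_le_pi hθ.1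
    (hθ.2.trans (by linarith [Real.pi_pos])))

lemma gd_div_sqrt_integrable (v : ℝ) (hv : 0 < v) :
    IntegrableOn (fun u => gd f u / Real.sqrt (v ^ 2 - u ^ 2)) (Ioo 0 v) := by
  rw [cov_sin_integrable v hv (fun u => gd f u / Real.sqrt (v ^ 2 - u ^ 2))]
  have heq : EqOn
      (fun θ => v * Real.cos θ * (gd f (v * Real.sin θ) / Real.sqrt (v ^ 2 - (v * Real.sin θ) ^ 2)))
      (fun θ => gd f (v * Real.sin θ)) (Ioo 0 (π/2)) := by
    intro θ hθ
    have hc : 0 < Real.cos θ := Real.cos_pos_of_mem_Ioo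
      ⟨by linarith [hθ.1, Real.pi_pos], hθ.2⟩
    show v * Real.cos θ * (gd f (v * Real.sin θ) / Real.sqrt (v ^ 2 - (v * Real.sin θ) ^ 2))
      = gd f (v * Real.sin θ)
    rw [sqrt_cos_helper v θ hv.le hθ]
    field_simp
  rw [integrableOn_congr_fun heq measurableSet_Ioo]
  exact ((gd_comp_sin_contOn hf v hv.le).integrableOn_compact isCompact_Icc).mono_set
    Ioo_subset_Icc_self

lemma abelInv_formula (t : ℝ) (ht : 0 < t) :
    abelInv f t = (2/π) * ∫ θ in (0:ℝ)..(π/2), Real.sin θ * gd f (t * Real.sin θ) := by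
  rw [abelInv]
  congr 1
  have hF := F_hasDeriv hf t ht
  have heq : (fun y => ∫ s in (0:ℝ)..y, s * f s / Real.sqrt (y ^ 2 - s ^ 2))
      =ᶠ[nhds t] (fun y => ∫ θ in (0:ℝ)..(π/2), gfun f (y * Real.sin θ)) :=
    Filter.eventually_of_mem (Ioi_mem_nhds ht) (fun y hy => F_eq y hy)
  exact (hF.congr_of_eventuallyEq heq).deriv


noncomputable def Wf (f : ℝ → ℝ) (x : ℝ) (p : ℝ × ℝ) : ℝ :=
  (p.1 * gd f p.2) / (x * Real.sqrt (x ^ 2 - p.1 ^ 2) * Real.sqrt (p.1 ^ 2 - p.2 ^ 2))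

noncomputable def W (f : ℝ → ℝ) (x : ℝ) : ℝ × ℝ → ℝ :=
  ({p : ℝ × ℝ | p.2 < p.1}).indicator (Wf f x)

omit hf in
lemma slice_v (x v : ℝ) : (fun u => W f x (v, u)) = (Iio v).indicator (fun u => Wf f x (v, u)) := by
  funext u
  by_cases h : u < v
  · simp [W, Set.indicator_apply, Set.mem_setOf_eq, h]
  · simp [W, Set.indicator_apply, Set.mem_setOf_eq, h]

omit hf in
lemma slice_u (x u : ℝ) : (fun v => W f x (v, u)) = (Ioi u).indicator (fun v => Wf f x (v, u)) := by
  funext v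
  by_cases h : u < v
  · simp [W, Set.indicator_apply, Set.mem_setOf_eq, h]
  · simp [W, Set.indicator_apply, Set.mem_setOf_eq, h]

omit hf in
lemma inter1 {x v : ℝ} (hv : v ∈ Ioo 0 x) : Ioo 0 x ∩ Iio v = Ioo 0 v := by
  ext u
  simp only [mem_inter_iff, mem_Ioo, mem_Iio]
  constructor
  · rintro ⟨⟨h1, h2⟩, h3⟩; exact ⟨h1, h3⟩
  · rintro ⟨h1, h2⟩; exact ⟨⟨h1, h2.trans hv.2⟩, h2⟩

omit hf in
lemma inter2 {x u : ℝ} (hu : u ∈ Ioo 0 x) : Ioo 0 x ∩ Ioi u = Ioo u x := by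
  ext v
  simp only [mem_inter_iff, mem_Ioo, mem_Ioi]
  constructor
  · rintro ⟨⟨h1, h2⟩, h3⟩; exact ⟨h3, h2⟩
  · rintro ⟨h1, h2⟩; exact ⟨⟨hu.1.trans h1, h2⟩, h1⟩

omit hf in
lemma claim1 {x : ℝ} (v : ℝ) (hv : v ∈ Ioo 0 x) :
    (v / (x * Real.sqrt (x ^ 2 - v ^ 2))) * (∫ u in Ioo 0 v, gd f u / Real.sqrt (v ^ 2 - u ^ 2))
      = ∫ u in Ioo 0 x, W f x (v, u) := by
  rw [slice_v x v, setIntegral_indicator measurableSet_Iio, inter1 hv,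
    show (fun u => Wf f x (v, u))
      = fun u => (v / (x * Real.sqrt (x ^ 2 - v ^ 2))) * (gd f u / Real.sqrt (v ^ 2 - u ^ 2)) from
      funext fun u => by simp only [Wf]; ring,
    MeasureTheory.integral_const_mul]

omit hf in
lemma claim2 {x : ℝ} (u : ℝ) (hu : u ∈ Ioo 0 x) :
    (∫ v in Ioo 0 x, W f x (v, u)) = (π / (2 * x)) * gd f u := by
  rw [slice_u x u, setIntegral_indicator measurableSet_Ioi, inter2 hu,
    show (fun v => Wf f x (v, u))
      = fun v => (gd f u / x) * (v / (Real.sqrt (x ^ 2 - v ^ 2) * Real.sqrt (v ^ 2 - u ^ 2))) from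
      funext fun v => by simp only [Wf]; ring,
    MeasureTheory.integral_const_mul, kernel_value hu.1 hu.2]
  ring

set_option maxHeartbeats 1000000 in
lemma W_meas {x : ℝ} : AEStronglyMeasurable (W f x)
    ((volume.restrict (Ioo 0 x)).prod (volume.restrict (Ioo 0 x))) := by
  rw [Measure.prod_restrict]
  refine AEStronglyMeasurable.indicator ?_ (measurableSet_lt measurable_snd measurable_fst)
  have hnum : AEStronglyMeasurable (fun p : ℝ × ℝ => p.1 * gd f p.2)
      ((volume.prod volume).restrict ((Ioo 0 x) ×ˢ (Ioo 0 x))) := by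
    refine ContinuousOn.aestronglyMeasurable ?_ (measurableSet_Ioo.prod measurableSet_Ioo)
    refine ContinuousOn.mul continuous_fst.continuousOn ?_
    refine (gd_contOn hf).comp continuous_snd.continuousOn ?_
    rintro ⟨v, u⟩ hp
    exact (mem_prod.mp hp).2.1.le
  have hden : Continuous (fun p : ℝ × ℝ =>
      x * Real.sqrt (x ^ 2 - p.1 ^ 2) * Real.sqrt (p.1 ^ 2 - p.2 ^ 2)) := by
    refine Continuous.mul (Continuous.mul continuous_const ?_) ?_
    · exact Real.continuous_sqrt.comp (continuous_const.sub ((continuous_fst).pow 2))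
    · exact Real.continuous_sqrt.comp (((continuous_fst).pow 2).sub ((continuous_snd).pow 2))
  have heq : Wf f x = fun p : ℝ × ℝ => (p.1 * gd f p.2)
      * (x * Real.sqrt (x ^ 2 - p.1 ^ 2) * Real.sqrt (p.1 ^ 2 - p.2 ^ 2))⁻¹ :=
    funext fun p => by rw [Wf, div_eq_mul_inv]
  rw [heq]
  exact ((hnum.aemeasurable).mul ((hden.measurable.inv).aemeasurable)).aestronglyMeasurable

lemma W_slice_int {x : ℝ} (v : ℝ) (hv : v ∈ Ioo 0 x) :
    Integrable (fun u => W f x (v, u)) (volume.restrict (Ioo 0 x)) := by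
  rw [slice_v x v, integrable_indicator_iff measurableSet_Iio]
  rw [IntegrableOn, Measure.restrict_restrict measurableSet_Iio, Set.inter_comm, inter1 hv]
  rw [show (fun u => Wf f x (v, u))
      = fun u => (v / (x * Real.sqrt (x ^ 2 - v ^ 2))) * (gd f u / Real.sqrt (v ^ 2 - u ^ 2)) from
      funext fun u => by simp only [Wf]; ring]
  exact (gd_div_sqrt_integrable hf v hv.1).const_mul _

omit hf in
lemma sin_integrableOn : IntegrableOn (fun θ : ℝ => Real.sin θ) (Ioo 0 (π/2)) :=
  (Real.continuous_sin.continuousOn.integrableOn_compact isCompact_Icc).mono_set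
    Ioo_subset_Icc_self

omit hf in
lemma weight_integrable {x : ℝ} (hx0 : 0 < x) :
    IntegrableOn (fun v => v / (x * Real.sqrt (x ^ 2 - v ^ 2))) (Ioo 0 x) := by
  rw [cov_sin_integrable x hx0 (fun v => v / (x * Real.sqrt (x ^ 2 - v ^ 2)))]
  have heq : EqOn
      (fun θ => x * Real.cos θ * ((x * Real.sin θ) / (x * Real.sqrt (x ^ 2 - (x * Real.sin θ) ^ 2))))
      (fun θ => Real.sin θ) (Ioo 0 (π/2)) := by
    intro θ hθ
    have hc : 0 < Real.cos θ := Real.cos_pos_of_mem_Ioo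
      ⟨by linarith [hθ.1, Real.pi_pos], hθ.2⟩
    show x * Real.cos θ * ((x * Real.sin θ) / (x * Real.sqrt (x ^ 2 - (x * Real.sin θ) ^ 2)))
      = Real.sin θ
    rw [sqrt_cos_helper x θ hx0.le hθ]
    field_simp
  rw [integrableOn_congr_fun heq measurableSet_Ioo]
  exact sin_integrableOn

lemma W_integrable {x : ℝ} (hx0 : 0 < x) :
    Integrable (Function.uncurry fun v u => W f x (v, u))
      ((volume.restrict (Ioo 0 x)).prod (volume.restrict (Ioo 0 x))) := by
  obtain ⟨M, hM⟩ := (isCompact_Icc (a := (0:ℝ)) (b := x)).exists_bound_of_continuousOn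
    ((gd_contOn hf).mono Icc_subset_Ici_self)
  have hWmeas : AEStronglyMeasurable (Function.uncurry fun v u => W f x (v, u))
      ((volume.restrict (Ioo 0 x)).prod (volume.restrict (Ioo 0 x))) := W_meas hf
  refine (integrable_prod_iff hWmeas).mpr ⟨?_, ?_⟩
  · filter_upwards [ae_restrict_mem measurableSet_Ioo] with v hv
    exact W_slice_int hf v hv
  · refine Integrable.mono' ((weight_integrable hx0).const_mul (M * (π/2)))
      hWmeas.norm.integral_prod_right' ?_
    filter_upwards [ae_restrict_mem measurableSet_Ioo] with v hv
    rw [Real.norm_eq_abs, abs_of_nonneg (integral_nonneg (fun u => norm_nonneg _))]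
    have hden1 : 0 < Real.sqrt (x ^ 2 - v ^ 2) := Real.sqrt_pos.mpr (by nlinarith [hv.1, hv.2])
    have hx0' : 0 < x := hv.1.trans hv.2
    calc (∫ u in Ioo 0 x, ‖W f x (v, u)‖)
        = ∫ u in Ioo 0 x, (Iio v).indicator (fun u => ‖Wf f x (v, u)‖) u := by
          refine setIntegral_congr_fun measurableSet_Ioo (fun u _ => ?_)
          rw [show W f x (v, u) = (Iio v).indicator (fun u => Wf f x (v, u)) u from
            congrFun (slice_v x v) u, norm_indicator_eq_indicator_norm]
      _ = ∫ u in Ioo 0 v, ‖Wf f x (v, u)‖ := by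
          rw [setIntegral_indicator measurableSet_Iio, inter1 hv]
      _ ≤ ∫ u in Ioo 0 v, (M * v / (x * Real.sqrt (x ^ 2 - v ^ 2))) * (1 / Real.sqrt (v ^ 2 - u ^ 2)) := by
          refine setIntegral_mono_on ?_ ?_ measurableSet_Ioo ?_
          · have h1 := ((gd_div_sqrt_integrable hf v hv.1).const_mul
              (v / (x * Real.sqrt (x ^ 2 - v ^ 2)))).norm
            rw [show (fun u => ‖(v / (x * Real.sqrt (x ^ 2 - v ^ 2)))
                * (gd f u / Real.sqrt (v ^ 2 - u ^ 2))‖) = fun u => ‖Wf f x (v, u)‖ from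
              funext fun u => congrArg Norm.norm (by simp only [Wf]; ring)] at h1
            exact h1
          · exact (one_div_sqrt_integrable v hv.1).const_mul _
          · intro u hu
            have hden2 : 0 < Real.sqrt (v ^ 2 - u ^ 2) := Real.sqrt_pos.mpr (by nlinarith [hu.1, hu.2])
            have hMu : |gd f u| ≤ M := by
              have := hM u ⟨hu.1.le, (hu.2.trans hv.2).le⟩
              rwa [Real.norm_eq_abs] at this
            rw [Real.norm_eq_abs]
            have habs : |Wf f x (v, u)|
                = (v * |gd f u|) / (x * Real.sqrt (x ^ 2 - v ^ 2) * Real.sqrt (v ^ 2 - u ^ 2)) := by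
              simp only [Wf]
              rw [abs_div, abs_mul, abs_of_pos hv.1,
                abs_of_pos (by positivity : (0:ℝ) < x * Real.sqrt (x ^ 2 - v ^ 2)
                  * Real.sqrt (v ^ 2 - u ^ 2))]
            rw [habs, show (M * v / (x * Real.sqrt (x ^ 2 - v ^ 2))) * (1 / Real.sqrt (v ^ 2 - u ^ 2))
              = (v * M) / (x * Real.sqrt (x ^ 2 - v ^ 2) * Real.sqrt (v ^ 2 - u ^ 2)) from by ring]
            gcongr
            exact hv.1.le
      _ = (M * v / (x * Real.sqrt (x ^ 2 - v ^ 2))) * (π/2) := by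
          rw [MeasureTheory.integral_const_mul, one_div_sqrt_integral v hv.1]
      _ = (M * (π/2)) * (v / (x * Real.sqrt (x ^ 2 - v ^ 2))) := by ring

end AbelAux

open AbelAux

theorem abel_right_inverse (f : ℝ → ℝ) (hf : ContDiffOn ℝ 1 f (Set.Ici 0)) :
    ∀ x ∈ Set.Ioi (0:ℝ), abel (abelInv f) x = f x := by
  intro x hx
  have hx0 : 0 < x := hx
  have hπ : (0:ℝ) < π/2 := by positivity
  have hcos : ∀ θ ∈ Ioo (0:ℝ) (π/2), 0 < Real.cos θ := fun θ hθ =>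
    Real.cos_pos_of_mem_Ioo ⟨by linarith [hθ.1, Real.pi_pos], hθ.2⟩
  -- Step A : substitute s = x sin φ in the outer integral
  have stepA : abel (abelInv f) x = ∫ φ in Ioo 0 (π/2), abelInv f (x * Real.sin φ) := by
    rw [abel, intervalIntegral.integral_of_le hx0.le, MeasureTheory.integral_Ioc_eq_integral_Ioo,
      cov_sin x hx0 (fun s => abelInv f s / Real.sqrt (x ^ 2 - s ^ 2))]
    refine setIntegral_congr_fun measurableSet_Ioo (fun φ hφ => ?_)
    have hc := hcos φ hφ
    show x * Real.cos φ
        * (abelInv f (x * Real.sin φ) / Real.sqrt (x ^ 2 - (x * Real.sin φ) ^ 2)) = _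
    rw [sqrt_cos_helper x φ hx0.le hφ]
    field_simp
  -- Step B : formula for abelInv at positive points
  have stepB : ∀ φ ∈ Ioo (0:ℝ) (π/2), abelInv f (x * Real.sin φ)
      = (2/π) * ∫ θ in Ioo 0 (π/2), Real.sin θ * gd f ((x * Real.sin φ) * Real.sin θ) := by
    intro φ hφ
    have hpos : 0 < x * Real.sin φ := (sin_mem x φ hx0 hφ).1
    rw [abelInv_formula hf _ hpos, intervalIntegral.integral_of_le hπ.le,
      MeasureTheory.integral_Ioc_eq_integral_Ioo]
  -- Fubini on the square
  have sq_int : Integrable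
      (Function.uncurry fun φ θ => Real.sin θ * gd f ((x * Real.sin φ) * Real.sin θ))
      ((volume.restrict (Ioo 0 (π/2))).prod (volume.restrict (Ioo 0 (π/2)))) := by
    rw [Measure.prod_restrict]
    refine (ContinuousOn.integrableOn_compact (isCompact_Icc.prod isCompact_Icc) ?_).mono_set
      (prod_mono Ioo_subset_Icc_self Ioo_subset_Icc_self)
    refine ContinuousOn.mul (Real.continuous_sin.comp continuous_snd).continuousOn ?_
    refine (gd_contOn hf).comp ?_ ?_
    · exact ((continuous_const.mul (Real.continuous_sin.comp continuous_fst)).mul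
        (Real.continuous_sin.comp continuous_snd)).continuousOn
    · rintro ⟨φ, θ⟩ hp
      obtain ⟨hφ, hθ⟩ := mem_prod.mp hp
      have s1 : 0 ≤ Real.sin φ := Real.sin_nonneg_of_nonneg_of_le_pi hφ.1
        (hφ.2.trans (by linarith [Real.pi_pos]))
      have s2 : 0 ≤ Real.sin θ := Real.sin_nonneg_of_nonneg_of_le_pi hθ.1
        (hθ.2.trans (by linarith [Real.pi_pos]))
      show (0:ℝ) ≤ x * Real.sin φ * Real.sin θ
      positivity
  -- inner change of variables
  have inner_eq : ∀ θ ∈ Ioo (0:ℝ) (π/2),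
      (∫ φ in Ioo 0 (π/2), Real.sin θ * gd f ((x * Real.sin φ) * Real.sin θ))
      = Real.sin θ * ∫ u in Ioo 0 (x * Real.sin θ),
          gd f u / Real.sqrt ((x * Real.sin θ) ^ 2 - u ^ 2) := by
    intro θ hθ
    have hc : 0 < x * Real.sin θ := (sin_mem x θ hx0 hθ).1
    rw [MeasureTheory.integral_const_mul]
    congr 1
    rw [cov_sin (x * Real.sin θ) hc
      (fun u => gd f u / Real.sqrt ((x * Real.sin θ) ^ 2 - u ^ 2))]
    refine setIntegral_congr_fun measurableSet_Ioo (fun φ hφ => ?_)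
    have hcφ := hcos φ hφ
    have hsθ : 0 < Real.sin θ := Real.sin_pos_of_pos_of_lt_pi hθ.1 (by linarith [hθ.2, Real.pi_pos])
    show gd f ((x * Real.sin φ) * Real.sin θ) = (x * Real.sin θ) * Real.cos φ
      * (gd f ((x * Real.sin θ) * Real.sin φ)
        / Real.sqrt ((x * Real.sin θ) ^ 2 - ((x * Real.sin θ) * Real.sin φ) ^ 2))
    rw [sqrt_cos_helper (x * Real.sin θ) φ hc.le hφ,
      show (x * Real.sin φ) * Real.sin θ = (x * Real.sin θ) * Real.sin φ from by ring]
    field_simp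
  -- outer change of variables
  have outer_eq :
      (∫ θ in Ioo 0 (π/2), Real.sin θ * ∫ u in Ioo 0 (x * Real.sin θ),
          gd f u / Real.sqrt ((x * Real.sin θ) ^ 2 - u ^ 2))
      = ∫ v in Ioo 0 x, (v / (x * Real.sqrt (x ^ 2 - v ^ 2)))
          * ∫ u in Ioo 0 v, gd f u / Real.sqrt (v ^ 2 - u ^ 2) := by
    rw [cov_sin x hx0 (fun v => (v / (x * Real.sqrt (x ^ 2 - v ^ 2)))
      * ∫ u in Ioo 0 v, gd f u / Real.sqrt (v ^ 2 - u ^ 2))]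
    refine setIntegral_congr_fun measurableSet_Ioo (fun θ hθ => ?_)
    have hc := hcos θ hθ
    show Real.sin θ * (∫ u in Ioo 0 (x * Real.sin θ),
        gd f u / Real.sqrt ((x * Real.sin θ) ^ 2 - u ^ 2))
      = x * Real.cos θ * (((x * Real.sin θ) / (x * Real.sqrt (x ^ 2 - (x * Real.sin θ) ^ 2)))
        * ∫ u in Ioo 0 (x * Real.sin θ), gd f u / Real.sqrt ((x * Real.sin θ) ^ 2 - u ^ 2))
    rw [sqrt_cos_helper x θ hx0.le hθ]
    have hne : x * Real.cos θ ≠ 0 := by positivity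
    field_simp
  have swap2 := MeasureTheory.integral_integral_swap (W_integrable hf hx0)
  calc abel (abelInv f) x
      = ∫ φ in Ioo 0 (π/2), abelInv f (x * Real.sin φ) := stepA
    _ = ∫ φ in Ioo 0 (π/2), (2/π) * ∫ θ in Ioo 0 (π/2),
          Real.sin θ * gd f ((x * Real.sin φ) * Real.sin θ) :=
        setIntegral_congr_fun measurableSet_Ioo stepB
    _ = (2/π) * ∫ φ in Ioo 0 (π/2), ∫ θ in Ioo 0 (π/2),
          Real.sin θ * gd f ((x * Real.sin φ) * Real.sin θ) :=
        MeasureTheory.integral_const_mul _ _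
    _ = (2/π) * ∫ θ in Ioo 0 (π/2), ∫ φ in Ioo 0 (π/2),
          Real.sin θ * gd f ((x * Real.sin φ) * Real.sin θ) := by
        rw [MeasureTheory.integral_integral_swap sq_int]
    _ = (2/π) * ∫ θ in Ioo 0 (π/2), Real.sin θ * ∫ u in Ioo 0 (x * Real.sin θ),
          gd f u / Real.sqrt ((x * Real.sin θ) ^ 2 - u ^ 2) := by
        rw [setIntegral_congr_fun measurableSet_Ioo inner_eq]
    _ = (2/π) * ∫ v in Ioo 0 x, (v / (x * Real.sqrt (x ^ 2 - v ^ 2)))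
          * ∫ u in Ioo 0 v, gd f u / Real.sqrt (v ^ 2 - u ^ 2) := by
        rw [outer_eq]
    _ = (2/π) * ∫ v in Ioo 0 x, ∫ u in Ioo 0 x, W f x (v, u) := by
        rw [setIntegral_congr_fun measurableSet_Ioo (fun v hv => claim1 v hv)]
    _ = (2/π) * ∫ u in Ioo 0 x, ∫ v in Ioo 0 x, W f x (v, u) := by rw [swap2]
    _ = (2/π) * ∫ u in Ioo 0 x, (π / (2 * x)) * gd f u := by
        rw [setIntegral_congr_fun measurableSet_Ioo (fun u hu => claim2 u hu)]
    _ = (2/π) * ((π / (2 * x)) * ∫ u in Ioo 0 x, gd f u) := by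
        rw [MeasureTheory.integral_const_mul]
    _ = (2/π) * ((π / (2 * x)) * (x * f x)) := by
        rw [← MeasureTheory.integral_Ioc_eq_integral_Ioo,
          ← intervalIntegral.integral_of_le hx0.le, gd_integral hf x hx0]
    _ = f x := by
        have hπ0 : (π:ℝ) ≠ 0 := Real.pi_ne_zero
        field_simp
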